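/- Let (m_j)_{j∈ℕ} be a strictly monotone sequence of natural numbers and (ρ_j)_{j∈ℕ} a sequence of strictly positive real numbers. If (i) there exists K ≥ 0 such that ℙ_X(S_{ρ_j}) ≤ K · ℙ_X(B_{ρ_j}) for all j ∈ ℕ, and (ii) m_j · ℙ_X(B̄_{ρ_j}) → ∞ as j → ∞, then 𝔼[𝟙_{S_{ρ_j}}(X^x_{m_j})·|η(X^x_{m_j}) − η(x)|] → 0 as j → ∞. -/

import Mathlib

open MeasureTheory Filter Topology Metric ProbabilityTheory Set Real

/-!
The integrand is at most `2C` times the indicator of the event `X^x_m ∈ S_ρ`. On that event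
some `Xᵢ` lies on `S_ρ` and all the other sample points avoid the open ball `B_ρ`, so by
independence and a union bound
`ℙ(X^x_m ∈ S_ρ) ≤ m μ(S_ρ) (1 - μ(B_ρ))^(m-1) ≤ K e · (m μ(B_ρ)) e^{-m μ(B_ρ)}`.
Since `μ(B̄_ρ) ≤ (1 + K) μ(B_ρ)`, also `m μ(B_ρ) → ∞`, and `t e^{-t} → 0` finishes the proof.
-/

theorem integral_indicator_comp_le {α Ω : Type*} [MeasurableSpace α] {mΩ : MeasurableSpace Ω}
    {P : Measure Ω} [IsFiniteMeasure P] {Y : Ω → α} (hY : Measurable Y) {S : Set α}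
    (hS : MeasurableSet S) {f : α → ℝ} {c : ℝ} (hf : ∀ y ∈ S, |f y| ≤ c) :
    ∫ ω, S.indicator f (Y ω) ∂P ≤ c * P.real (Y ⁻¹' S) := by
  simp_rw [← indicator_comp_right Y, integral_indicator (hY hS)]
  exact (Real.le_norm_self _).trans
    (norm_setIntegral_le_of_norm_le_const (measure_lt_top P (Y ⁻¹' S)) fun ω hω => hf (Y ω) hω)

theorem one_sub_pow_pred_le_exp {p : ℝ} (hp : p ≤ 1) {m : ℕ} (hm : 1 ≤ m) :
    (1 - p) ^ (m - 1) ≤ exp 1 * exp (-(m * p)) :=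
  calc (1 - p) ^ (m - 1) ≤ exp (-p) ^ (m - 1) :=
        pow_le_pow_left₀ (by linarith) (by linarith [add_one_le_exp (-p)]) _
    _ = exp p * exp (-(m * p)) := by
        rw [← exp_nat_mul, ← exp_add, Nat.cast_sub hm, Nat.cast_one]
        ring_nf
    _ ≤ exp 1 * exp (-(m * p)) := by gcongr

theorem tendsto_mul_measureReal_ball_atTop {𝒳 ι : Type*} [MetricSpace 𝒳] [MeasurableSpace 𝒳]
    {μ : Measure 𝒳} [IsFiniteMeasure μ] {x : 𝒳} {l : Filter ι} {c ρ : ι → ℝ} {K : ℝ}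
    (hK : 0 ≤ K) (hc : ∀ j, 0 ≤ c j)
    (hsphere : ∀ j, μ.real (sphere x (ρ j)) ≤ K * μ.real (ball x (ρ j)))
    (hclosed : Tendsto (fun j => c j * μ.real (closedBall x (ρ j))) l atTop) :
    Tendsto (fun j => c j * μ.real (ball x (ρ j))) l atTop := by
  refine tendsto_atTop_mono (fun j => ?_) (hclosed.atTop_div_const (by linarith : 0 < 1 + K))
  have : μ.real (closedBall x (ρ j)) ≤ (1 + K) * μ.real (ball x (ρ j)) :=
    calc μ.real (closedBall x (ρ j))
        ≤ μ.real (ball x (ρ j)) + μ.real (sphere x (ρ j)) := by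
          rw [← ball_union_sphere]; exact measureReal_union_le _ _
      _ ≤ (1 + K) * μ.real (ball x (ρ j)) := by linarith [hsphere j]
  rw [div_le_iff₀ (by linarith)]
  calc c j * μ.real (closedBall x (ρ j)) ≤ c j * ((1 + K) * μ.real (ball x (ρ j))) :=
        mul_le_mul_of_nonneg_left this (hc j)
    _ = c j * μ.real (ball x (ρ j)) * (1 + K) := by ring

theorem measureReal_iInter_preimage_ite {Ω α : Type*} [MeasurableSpace α] {mΩ : MeasurableSpace Ω}
    {P : Measure Ω} {X : ℕ → Ω → α} {μ : Measure α} {m : ℕ} (hXmeas : ∀ i, Measurable (X i))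
    (hXindep : iIndepFun X P) (hXdist : ∀ i, P.map (X i) = μ) {S T : Set α}
    (hS : MeasurableSet S) (hT : MeasurableSet T) {i : ℕ} (hi : i < m) :
    P.real (⋂ k ∈ Finset.range m, X k ⁻¹' (if k = i then S else T))
      = μ.real S * μ.real T ^ (m - 1) := by
  have hmeas : ∀ k ∈ Finset.range m, MeasurableSet (if k = i then S else T) :=
    fun k _ => by split_ifs <;> assumption
  have hlaw : ∀ k (s : Set α), MeasurableSet s → P (X k ⁻¹' s) = μ s := fun k s hs => by
    rw [← hXdist k, Measure.map_apply (hXmeas k) hs]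
  have hT' : ∀ k ∈ (Finset.range m).erase i, P (X k ⁻¹' (if k = i then S else T)) = μ T :=
    fun k hk => by rw [if_neg (Finset.ne_of_mem_erase hk), hlaw k T hT]
  rw [measureReal_def, hXindep.measure_inter_preimage_eq_mul _ hmeas,
    ← Finset.mul_prod_erase _ _ (Finset.mem_range.mpr hi), Finset.prod_congr rfl hT',
    Finset.prod_const, Finset.card_erase_of_mem (Finset.mem_range.mpr hi), Finset.card_range,
    if_pos rfl, hlaw i S hS, ENNReal.toReal_mul, ENNReal.toReal_pow, measureReal_def,
    measureReal_def]

section NearestNeighbor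

variable {𝒳 Ω : Type*} [MetricSpace 𝒳] {X : ℕ → Ω → 𝒳} {m : ℕ}

def IsNearestNeighbor (x : 𝒳) (X : ℕ → Ω → 𝒳) (m : ℕ) (Y : Ω → 𝒳) : Prop :=
  ∀ ω, (∃ i < m, Y ω = X i ω) ∧ ∀ k < m, dist x (Y ω) ≤ dist x (X k ω)

theorem IsNearestNeighbor.preimage_sphere_subset {x : 𝒳} {Y : Ω → 𝒳}
    (hY : IsNearestNeighbor x X m Y) (r : ℝ) :
    Y ⁻¹' sphere x r ⊆ ⋃ i ∈ Finset.range m,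
      ⋂ k ∈ Finset.range m, X k ⁻¹' (if k = i then sphere x r else (ball x r)ᶜ) := by
  intro ω hω
  obtain ⟨⟨i, hi, hYi⟩, hmin⟩ := hY ω
  simp only [mem_iUnion, mem_iInter, Finset.mem_range, mem_preimage]
  refine ⟨i, hi, fun k hk => ?_⟩
  split_ifs with hki
  · rwa [hki, ← hYi]
  · simp only [mem_compl_iff, mem_ball', not_lt]
    exact (mem_sphere'.mp hω).symm.le.trans (hmin k hk)

theorem IsNearestNeighbor.measureReal_preimage_sphere_le [MeasurableSpace 𝒳] [BorelSpace 𝒳]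
    {mΩ : MeasurableSpace Ω} {P : Measure Ω} [IsFiniteMeasure P] {μ : Measure 𝒳}
    [IsProbabilityMeasure μ] (hXmeas : ∀ i, Measurable (X i))
    (hXindep : iIndepFun X P) (hXdist : ∀ i, P.map (X i) = μ) {x : 𝒳} {Y : Ω → 𝒳}
    (hY : IsNearestNeighbor x X m Y) (r : ℝ) :
    P.real (Y ⁻¹' sphere x r)
      ≤ m * μ.real (sphere x r) * (1 - μ.real (ball x r)) ^ (m - 1) :=
  calc P.real (Y ⁻¹' sphere x r)
      ≤ ∑ i ∈ Finset.range m, P.real (⋂ k ∈ Finset.range m,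
          X k ⁻¹' (if k = i then sphere x r else (ball x r)ᶜ)) :=
        (measureReal_mono (hY.preimage_sphere_subset r) (measure_ne_top _ _)).trans
          (measureReal_biUnion_finset_le _ _)
    _ = ∑ _i ∈ Finset.range m, μ.real (sphere x r) * μ.real (ball x r)ᶜ ^ (m - 1) :=
        Finset.sum_congr rfl fun i hi => measureReal_iInter_preimage_ite hXmeas hXindep hXdist
          isClosed_sphere.measurableSet measurableSet_ball.compl (Finset.mem_range.mp hi)
    _ = m * μ.real (sphere x r) * (1 - μ.real (ball x r)) ^ (m - 1) := by
        rw [Finset.sum_const, Finset.card_range, nsmul_eq_mul, mul_assoc,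
          probReal_compl_eq_one_sub measurableSet_ball]

end NearestNeighbor

theorem stmt_6_general
    {𝒳 Ω : Type*} [MetricSpace 𝒳] [MeasurableSpace 𝒳] [BorelSpace 𝒳]
    {mΩ : MeasurableSpace Ω} (P : Measure Ω) [IsProbabilityMeasure P]
    (X : ℕ → Ω → 𝒳) (μ : Measure 𝒳)
    (hXmeas : ∀ i, Measurable (X i))
    (hXindep : ProbabilityTheory.iIndepFun X P)
    (hXdist : ∀ i, P.map (X i) = μ)
    (x : 𝒳)
    (η : 𝒳 → ℝ) (C : ℝ) (hηbdd : ∀ y, |η y| ≤ C)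
    (NN : ℕ → Ω → 𝒳)
    (hNNmeas : ∀ m, 1 ≤ m → Measurable (NN m))
    (hNN : ∀ m, 1 ≤ m → ∀ ω, (∃ i < m, NN m ω = X i ω) ∧
      ∀ j < m, dist x (NN m ω) ≤ dist x (X j ω))
    (mseq : ℕ → ℕ) (hmpos : ∀ j, 1 ≤ mseq j)
    (ρ : ℕ → ℝ)
    (K : ℝ) (hK : 0 ≤ K)
    (hsphere : ∀ j, (μ (Metric.sphere x (ρ j))).toReal ≤
      K * (μ (Metric.ball x (ρ j))).toReal)
    (hdiv : Tendsto
      (fun j : ℕ => (mseq j : ℝ) * (μ (Metric.closedBall x (ρ j))).toReal)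
      atTop atTop) :
    Tendsto
      (fun j : ℕ =>
        ∫ ω, Set.indicator (Metric.sphere x (ρ j)) (fun y => |η y - η x|)
          (NN (mseq j) ω) ∂P)
      atTop (𝓝 0) := by
  have : IsProbabilityMeasure μ :=
    hXdist 0 ▸ Measure.isProbabilityMeasure_map (hXmeas 0).aemeasurable
  set a : ℕ → ℝ := fun j => mseq j * μ.real (ball x (ρ j))
  have ha : Tendsto a atTop atTop :=
    tendsto_mul_measureReal_ball_atTop hK (fun j => Nat.cast_nonneg _) hsphere hdiv
  have hdev : ∀ y, |(|η y - η x|)| ≤ 2 * C := fun y => by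
    rw [abs_abs, two_mul]; exact (abs_sub _ _).trans (add_le_add (hηbdd y) (hηbdd x))
  have hC : 0 ≤ 2 * C := (abs_nonneg _).trans (hdev x)
  have hbound : ∀ j,
      ∫ ω, (sphere x (ρ j)).indicator (fun y => |η y - η x|) (NN (mseq j) ω) ∂P ≤ 2 * C * K * exp 1 * (a j * exp (-a j)) := fun j =>
    calc _ ≤ 2 * C * P.real (NN (mseq j) ⁻¹' sphere x (ρ j)) :=
          integral_indicator_comp_le (hNNmeas _ (hmpos j)) isClosed_sphere.measurableSet
            fun y _ => hdev y
      _ ≤ 2 * C * (mseq j * μ.real (sphere x (ρ j)) *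
            (1 - μ.real (ball x (ρ j))) ^ (mseq j - 1)) := by
          gcongr
          exact IsNearestNeighbor.measureReal_preimage_sphere_le hXmeas hXindep hXdist
            (hNN _ (hmpos j)) (ρ j)
      _ ≤ 2 * C * (mseq j * (K * μ.real (ball x (ρ j))) * (exp 1 * exp (-a j))) := by
          have hball_le : μ.real (ball x (ρ j)) ≤ 1 := measureReal_le_one
          gcongr
          · exact hsphere j
          · exact one_sub_pow_pred_le_exp hball_le (hmpos j)
      _ = 2 * C * K * exp 1 * (a j * exp (-a j)) := by ring
  have hlim := ((tendsto_pow_mul_exp_neg_atTop_nhds_zero 1).comp ha).const_mul (2 * C * K * exp 1)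
  refine squeeze_zero (fun j => integral_nonneg fun ω => ?_) hbound (by simpa using hlim)
  exact indicator_nonneg (fun y _ => abs_nonneg _) _

/-- **Lemma (vanishing sphere terms).**
In the nearest-neighbor setting, let `(m_j)` be a strictly monotone sequence of
(positive) natural numbers and `(ρ_j)` a sequence of strictly positive reals. If
(i) there is `K ≥ 0` with `μ(S_{ρ_j}) ≤ K · μ(B_{ρ_j})` for all `j`, and
(ii) `m_j · μ(B̄_{ρ_j}) → ∞`, then
`𝔼[𝟙_{S_{ρ_j}}(NN (m_j))·|η(NN (m_j)) − η(x)|] → 0` as `j → ∞`. -/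
theorem stmt_6
    {𝒳 Ω : Type*} [MetricSpace 𝒳] [MeasurableSpace 𝒳] [BorelSpace 𝒳]
    {mΩ : MeasurableSpace Ω} (P : Measure Ω) [IsProbabilityMeasure P]
    (X : ℕ → Ω → 𝒳) (μ : Measure 𝒳)
    (hXmeas : ∀ i, Measurable (X i))
    (hXindep : ProbabilityTheory.iIndepFun X P)
    (hXdist : ∀ i, P.map (X i) = μ)
    (x : 𝒳) (hsupp : ∀ r > (0 : ℝ), 0 < μ (Metric.closedBall x r))
    (η : 𝒳 → ℝ) (hηmeas : Measurable η) (C : ℝ) (hηbdd : ∀ y, |η y| ≤ C)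
    (NN : ℕ → Ω → 𝒳)
    (hNNmeas : ∀ m, 1 ≤ m → Measurable (NN m))
    (hNN : ∀ m, 1 ≤ m → ∀ ω, (∃ i < m, NN m ω = X i ω) ∧
      ∀ j < m, dist x (NN m ω) ≤ dist x (X j ω))
    (mseq : ℕ → ℕ) (hmono : StrictMono mseq) (hmpos : ∀ j, 1 ≤ mseq j)
    (ρ : ℕ → ℝ) (hρpos : ∀ j, 0 < ρ j)
    (K : ℝ) (hK : 0 ≤ K)
    (hsphere : ∀ j, (μ (Metric.sphere x (ρ j))).toReal ≤
      K * (μ (Metric.ball x (ρ j))).toReal)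
    (hdiv : Tendsto
      (fun j : ℕ => (mseq j : ℝ) * (μ (Metric.closedBall x (ρ j))).toReal)
      atTop atTop) :
    Tendsto
      (fun j : ℕ =>
        ∫ ω, Set.indicator (Metric.sphere x (ρ j)) (fun y => |η y - η x|)
          (NN (mseq j) ω) ∂P)
      atTop (𝓝 0) :=
  stmt_6_general (mΩ := mΩ) P X μ hXmeas hXindep hXdist x η C hηbdd NN hNNmeas hNN mseq hmpos ρ K hK
    hsphere hdiv
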